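/- Let n ≥ 1 and let u ∈ ℝ^n be the vector with u_j = ξ_{min(j, n+1−j) − 1} for j = 1,…,n. Then for every i with 0 ≤ i ≤ n−1, ∑_{j=1}^{n−i} u_j u_{i+j} ≥ 1, with equality whenever i ≥ ⌈n/2⌉. (In other words, every superdiagonal sum of the rank-one matrix u uᵀ is at least 1.) -/
import Mathlib

/-- `ξ i = C(2i, i) / 4^i`. -/
noncomputable def xi (i : ℕ) : ℝ := (Nat.choose (2 * i) i : ℝ) / 4 ^ i

lemma xi_pos (i : ℕ) : 0 < xi i := by
  unfold xi
  have h : 0 < Nat.choose (2 * i) i := Nat.choose_pos (by omega)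
  have : (0:ℝ) < (Nat.choose (2 * i) i : ℝ) := by exact_mod_cast h
  positivity

lemma xi_succ (i : ℕ) : (2 * (i:ℝ) + 2) * xi (i + 1) = (2 * i + 1) * xi i := by
  have h := Nat.succ_mul_centralBinom_succ i
  simp only [Nat.centralBinom] at h
  unfold xi
  have h4 : (4:ℝ) ^ (i+1) = 4 * 4 ^ i := by ring
  have hc : ((i:ℝ) + 1) * (Nat.choose (2 * (i+1)) (i+1) : ℝ) = 2 * (2 * i + 1) * (Nat.choose (2*i) i : ℝ) := by
    exact_mod_cast congrArg (Nat.cast : ℕ → ℝ) h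
  rw [h4]
  field_simp
  nlinarith [hc, pow_pos (by norm_num : (0:ℝ) < 4) i]

lemma xi_anti : Antitone xi := by
  apply antitone_nat_of_succ_le
  intro i
  have h := xi_succ i
  nlinarith [xi_pos i, xi_pos (i+1)]

lemma xi_conv (m : ℕ) : ∑ j ∈ Finset.range (m+1), xi j * xi (m - j) = 1 := by
  induction m with
  | zero => simp [xi]
  | succ m ih =>
    set S : ℕ → ℝ := fun k => ∑ j ∈ Finset.range (k+1), xi j * xi (k - j) with hS
    have key : ∀ k : ℕ, (∑ j ∈ Finset.range (k+1), (2*(j:ℝ)) * (xi j * xi (k - j)))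
        = (k:ℝ) * S k := by
      intro k
      have hrefl := Finset.sum_range_reflect (fun j => (2*(j:ℝ)) * (xi j * xi (k - j))) (k+1)
      have h2 : (∑ j ∈ Finset.range (k+1), (2*(j:ℝ)) * (xi j * xi (k - j)))
          + (∑ j ∈ Finset.range (k+1), (2*(j:ℝ)) * (xi j * xi (k - j)))
          = ∑ j ∈ Finset.range (k+1), (2*(k:ℝ)) * (xi j * xi (k - j)) := by
        nth_rewrite 1 [← hrefl]
        rw [← Finset.sum_add_distrib]
        apply Finset.sum_congr rfl
        intro j hj
        have hjk : j ≤ k := by simpa [Nat.lt_succ_iff] using hj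
        have e1 : k + 1 - 1 - j = k - j := by omega
        have e2 : k - (k - j) = j := by omega
        rw [e1, e2]
        have : ((k - j : ℕ) : ℝ) = (k:ℝ) - j := by
          push_cast [Nat.cast_sub hjk]; ring
        rw [this]
        ring
      have := h2
      rw [← Finset.mul_sum] at this
      simp only [hS]
      linarith [this]
    set A : ℝ := ∑ j ∈ Finset.range (m+1), (2*(j:ℝ)+1) * (xi j * xi (m - j)) with hA
    have hA1 : A = ((m:ℝ)+1) * S m := by
      have : A = (∑ j ∈ Finset.range (m+1), (2*(j:ℝ)) * (xi j * xi (m - j))) + S m := by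
        rw [hA, hS, ← Finset.sum_add_distrib]
        apply Finset.sum_congr rfl
        intro j hj; ring
      rw [this, key m]; ring
    have hA2 : A = ((m:ℝ)+1) * S (m+1) := by
      have step : A = ∑ j ∈ Finset.range (m+1), (2*((j:ℝ)+1)) * (xi (j+1) * xi (m - j)) := by
        rw [hA]
        apply Finset.sum_congr rfl
        intro j hj
        have h := xi_succ j
        have : (2*(j:ℝ)+1) * xi j = (2*((j:ℝ)+1)) * xi (j+1) := by linarith [h]
        calc (2*(j:ℝ)+1) * (xi j * xi (m - j)) = ((2*(j:ℝ)+1) * xi j) * xi (m-j) := by ring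
          _ = ((2*((j:ℝ)+1)) * xi (j+1)) * xi (m-j) := by rw [this]
          _ = (2*((j:ℝ)+1)) * (xi (j+1) * xi (m - j)) := by ring
      have shift : (∑ k ∈ Finset.range (m+2), (2*(k:ℝ)) * (xi k * xi (m+1 - k)))
          = ∑ j ∈ Finset.range (m+1), (2*((j:ℝ)+1)) * (xi (j+1) * xi (m - j)) := by
        rw [Finset.sum_range_succ']
        simp only [Nat.cast_zero, mul_zero, zero_mul, add_zero]
        apply Finset.sum_congr rfl
        intro j hj
        have : m + 1 - (j + 1) = m - j := by omega
        rw [this]; push_cast; ring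
      rw [step, ← shift, key (m+1)]
      push_cast; ring
    have hm : ((m:ℝ)+1) ≠ 0 := by positivity
    have : S (m+1) = S m := by
      have := hA1.symm.trans hA2
      exact (mul_left_cancel₀ hm this.symm)
    simpa using this.trans ih

/-- Let `n ≥ 1` and let `u` be the `n`-vector with `u_j = ξ_{min(j, n+1−j) − 1}` for
`j = 1, …, n` (written below with `0`-based indices: `u_j = ξ_{min(j, n−1−j)}` for
`0 ≤ j ≤ n−1`).  Then for every `i` with `0 ≤ i ≤ n−1`, the superdiagonal sum
`∑_{j=1}^{n−i} u_j u_{i+j}` is at least `1`, with equality whenever `i ≥ ⌈n/2⌉`. -/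
theorem dual_superdiagonal_sums (n : ℕ) (hn : 1 ≤ n) :
    let u : ℕ → ℝ := fun j => xi (min j (n - 1 - j))
    (∀ i < n, 1 ≤ ∑ j ∈ Finset.range (n - i), u j * u (j + i)) ∧
    (∀ i < n, (n + 1) / 2 ≤ i → ∑ j ∈ Finset.range (n - i), u j * u (j + i) = 1) := by
  intro u
  constructor
  · intro i hi
    set m := n - 1 - i with hm
    have hni : n - i = m + 1 := by omega
    rw [hni]
    calc (1:ℝ) = ∑ j ∈ Finset.range (m+1), xi j * xi (m - j) := (xi_conv m).symm
      _ ≤ ∑ j ∈ Finset.range (m+1), u j * u (j + i) := by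
          apply Finset.sum_le_sum
          intro j hj
          have hjm : j ≤ m := by simpa [Nat.lt_succ_iff] using hj
          have h1 : min j (n - 1 - j) ≤ j := min_le_left _ _
          have h2 : min (j + i) (n - 1 - (j + i)) ≤ m - j := by
            have : n - 1 - (j + i) = m - j := by omega
            rw [this]; exact min_le_right _ _
          have u1 : xi j ≤ u j := xi_anti h1
          have u2 : xi (m - j) ≤ u (j + i) := xi_anti h2
          have := xi_pos j
          have := xi_pos (m - j)
          nlinarith [xi_pos (min j (n-1-j)), xi_pos (min (j+i) (n-1-(j+i)))]
  · intro i hi hhalf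
    have h2i : n ≤ 2 * i := by omega
    set m := n - 1 - i with hm
    have hni : n - i = m + 1 := by omega
    rw [hni]
    rw [show (1:ℝ) = ∑ j ∈ Finset.range (m+1), xi j * xi (m - j) from (xi_conv m).symm]
    apply Finset.sum_congr rfl
    intro j hj
    have hjm : j ≤ m := by simpa [Nat.lt_succ_iff] using hj
    have e1 : min j (n - 1 - j) = j := by omega
    have e2 : min (j + i) (n - 1 - (j + i)) = m - j := by omega
    simp only [u, e1, e2]
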